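/- Let G be a block graph in Bl(k,φ) and let D be a maximum dissociation set of G. If G has two adjacent blocks B₁ and B₂ (sharing a cut vertex) such that |B₁ ∩ D| = |B₂ ∩ D| = 1, then G does not have maximal spectral radius in Bl(k,φ); that is, there exists a block graph G' in Bl(k,φ) with ρ(G) < ρ(G'). -/

import Mathlib

namespace SpectralBlock

variable {V : Type*}

open Classical in
/-- The real adjacency matrix of a simple graph. -/
noncomputable def adjMat [Fintype V] (G : SimpleGraph V) : Matrix V V ℝ :=
  Matrix.of fun u v => if G.Adj u v then (1 : ℝ) else 0

/-- The spectral radius of a graph: the largest real eigenvalue of its adjacency matrix. -/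
noncomputable def specRad [Fintype V] (G : SimpleGraph V) : ℝ :=
  sSup {r : ℝ | ∃ x : V → ℝ, x ≠ 0 ∧ (adjMat G).mulVec x = r • x}

/-- A Perron vector of `G`: an entrywise positive eigenvector of the adjacency
matrix for the eigenvalue `specRad G`. -/
def IsPerron [Fintype V] (G : SimpleGraph V) (x : V → ℝ) : Prop :=
  (∀ v, 0 < x v) ∧ (adjMat G).mulVec x = specRad G • x

/-- A dissociation set: a set of vertices inducing a subgraph of maximum degree at most 1. -/
def IsDissoc (G : SimpleGraph V) (D : Set V) : Prop :=
  ∀ v ∈ D, (D ∩ {u | G.Adj v u}).ncard ≤ 1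

/-- The dissociation number: the maximum cardinality of a dissociation set. -/
noncomputable def dissocNum [Fintype V] (G : SimpleGraph V) : ℕ :=
  sSup {n : ℕ | ∃ D : Set V, IsDissoc G D ∧ D.ncard = n}

/-- A maximum dissociation set. -/
def IsMaxDissoc [Fintype V] (G : SimpleGraph V) (D : Set V) : Prop :=
  IsDissoc G D ∧ D.ncard = dissocNum G

/-- A cut vertex of a connected graph: a vertex whose removal disconnects the graph. -/
def IsCutVertex (G : SimpleGraph V) (v : V) : Prop :=
  G.Connected ∧ ¬ ((⊤ : G.Subgraph).deleteVerts {v}).coe.Connected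

/-- A block of a graph, viewed as a set of vertices: a maximal set inducing a
connected subgraph having no cut vertex of its own. -/
def IsBlock (G : SimpleGraph V) (B : Set V) : Prop :=
  (G.induce B).Connected ∧ (∀ v, ¬ IsCutVertex (G.induce B) v) ∧
    ∀ C : Set V, B ⊆ C → (G.induce C).Connected →
      (∀ v, ¬ IsCutVertex (G.induce C) v) → B = C

/-- A pendant block: a block containing at most one cut vertex of the graph. -/
def IsPendantBlock (G : SimpleGraph V) (B : Set V) : Prop :=
  IsBlock G B ∧ {v | v ∈ B ∧ IsCutVertex G v}.Subsingleton

/-- A block graph: a connected graph each of whose blocks is a complete graph. -/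
def IsBlockGraph (G : SimpleGraph V) : Prop :=
  G.Connected ∧ ∀ B : Set V, IsBlock G B → B.Pairwise G.Adj

/-- The class `Bl(k, φ)` of block graphs on `k` vertices with dissociation number `φ`. -/
def memBl (k φ : ℕ) (G : SimpleGraph (Fin k)) : Prop :=
  IsBlockGraph G ∧ dissocNum G = φ

/-- `G` has maximal spectral radius in the class `Bl(k, φ)`. -/
def MaxSpecIn (k φ : ℕ) (G : SimpleGraph (Fin k)) : Prop :=
  memBl k φ G ∧ ∀ H : SimpleGraph (Fin k), memBl k φ H → specRad H ≤ specRad G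



section WalkLift

variable {W : Type*}

/-- Walk-based connectivity of a vertex set. -/
def Conn (G : SimpleGraph V) (S : Set V) : Prop :=
  S.Nonempty ∧ ∀ a ∈ S, ∀ b ∈ S, ∃ w : G.Walk a b, ∀ x ∈ w.support, x ∈ S

/-- Goodness: connected with no cut vertex, in walk terms. -/
def Good (G : SimpleGraph V) (S : Set V) : Prop :=
  Conn G S ∧ ∀ x ∈ S, Conn G (S \ {x})

lemma lift_reachable {G : SimpleGraph V} (H : SimpleGraph W) (f : W → V)
    (hinj : Function.Injective f)
    (hadj : ∀ u v : W, H.Adj u v ↔ G.Adj (f u) (f v)) {T : Set V}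
    (hrange : Set.range f = T) :
    ∀ {a b : V} (w : G.Walk a b), (∀ x ∈ w.support, x ∈ T) →
      ∀ (u v : W), f u = a → f v = b → H.Reachable u v := by
  intro a b w
  induction w with
  | nil =>
    intro _ u v hu hv
    have : u = v := hinj (hu.trans hv.symm)
    exact this ▸ SimpleGraph.Reachable.refl u
  | @cons a c b hac p ih =>
    intro hsup u v hu hv
    have hcT : c ∈ T := hsup c (by simp [SimpleGraph.Walk.support_cons])
    obtain ⟨m, hm⟩ := hrange ▸ hcT
    have h1 : H.Adj u m := (hadj u m).2 (by rw [hu, hm]; exact hac)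
    have h2 : H.Reachable m v := ih (fun x hx => hsup x (by simp [SimpleGraph.Walk.support_cons, hx])) m v hm hv
    exact (SimpleGraph.Adj.reachable h1).trans h2

lemma connected_iff_conn {G : SimpleGraph V} (H : SimpleGraph W) (f : W → V)
    (hinj : Function.Injective f)
    (hadj : ∀ u v : W, H.Adj u v ↔ G.Adj (f u) (f v)) {T : Set V}
    (hrange : Set.range f = T) :
    H.Connected ↔ Conn G T := by
  constructor
  · intro hc
    obtain ⟨w0⟩ := hc.nonempty
    refine ⟨⟨f w0, hrange ▸ Set.mem_range_self w0⟩, ?_⟩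
    rintro a ha b hb
    obtain ⟨u, hu⟩ := hrange ▸ ha
    obtain ⟨v, hv⟩ := hrange ▸ hb
    obtain ⟨p⟩ := hc.preconnected u v
    refine ⟨(hu ▸ hv ▸ (p.map ⟨f, fun h => (hadj _ _).1 h⟩) : G.Walk a b), ?_⟩
    subst hu hv
    intro x hx
    rw [SimpleGraph.Walk.support_map] at hx
    obtain ⟨y, _, rfl⟩ := List.mem_map.1 hx
    exact hrange ▸ Set.mem_range_self y
  · rintro ⟨⟨t0, ht0⟩, hwalk⟩
    obtain ⟨u0, hu0⟩ := hrange ▸ ht0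
    haveI : Nonempty W := ⟨u0⟩
    refine ⟨fun u v => ?_⟩
    have hu : f u ∈ T := hrange ▸ Set.mem_range_self u
    have hv : f v ∈ T := hrange ▸ Set.mem_range_self v
    obtain ⟨w, hw⟩ := hwalk (f u) hu (f v) hv
    exact lift_reachable H f hinj hadj hrange w hw u v rfl rfl

lemma conn_induce_iff {G : SimpleGraph V} {S : Set V} :
    (G.induce S).Connected ↔ Conn G S := by
  refine connected_iff_conn _ (fun u : S => (u : V)) Subtype.val_injective (fun u v => ?_) Subtype.range_val
  simp [SimpleGraph.comap_adj]

lemma conn_del_iff {G : SimpleGraph V} {S : Set V} (x : S) :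
    ((⊤ : (G.induce S).Subgraph).deleteVerts {x}).coe.Connected ↔ Conn G (S \ {(x : V)}) := by
  refine connected_iff_conn (G := G) (T := S \ {(x : V)}) ((⊤ : (G.induce S).Subgraph).deleteVerts {x}).coe (fun u => ((u : S) : V)) ?_ (fun u v => ?_) ?_
  · intro a b hab
    exact Subtype.ext (Subtype.ext hab)
  · have hu := u.2.2
    have hv := v.2.2
    simp only [SimpleGraph.Subgraph.coe_adj, SimpleGraph.Subgraph.deleteVerts_adj,
      SimpleGraph.Subgraph.top_adj, SimpleGraph.comap_adj, Function.Embedding.coe_subtype] at *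
    tauto
  · ext y
    simp only [Set.mem_range, Set.mem_diff, Set.mem_singleton_iff]
    constructor
    · rintro ⟨u, rfl⟩
      exact ⟨(u : S).2, fun h => u.2.2 (by simp [Set.mem_singleton_iff, Subtype.ext h])⟩
    · rintro ⟨hS, hne⟩
      exact ⟨⟨⟨y, hS⟩, ⟨trivial, fun h => hne (congrArg Subtype.val (by simpa using h))⟩⟩, rfl⟩

end WalkLift

lemma good_iff {G : SimpleGraph V} {S : Set V} :
    ((G.induce S).Connected ∧ ∀ v, ¬ IsCutVertex (G.induce S) v) ↔ Good G S := by
  constructor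
  · rintro ⟨hc, hcut⟩
    refine ⟨conn_induce_iff.1 hc, fun x hx => ?_⟩
    have h := hcut ⟨x, hx⟩
    rw [IsCutVertex] at h
    push_neg at h
    exact (conn_del_iff ⟨x, hx⟩).1 (h hc)
  · rintro ⟨hconn, hdel⟩
    refine ⟨conn_induce_iff.2 hconn, ?_⟩
    rintro v ⟨hc, hnc⟩
    exact hnc ((conn_del_iff v).2 (hdel v v.2))

lemma isBlock_iff {G : SimpleGraph V} {B : Set V} :
    IsBlock G B ↔ Good G B ∧ ∀ C : Set V, B ⊆ C → Good G C → B = C := by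
  constructor
  · rintro ⟨h1, h2, h3⟩
    refine ⟨good_iff.1 ⟨h1, h2⟩, fun C hBC hC => ?_⟩
    obtain ⟨hc, hcut⟩ := good_iff.2 hC
    exact h3 C hBC hc hcut
  · rintro ⟨hg, hmax⟩
    obtain ⟨h1, h2⟩ := good_iff.2 hg
    exact ⟨h1, h2, fun C hBC hc hcut => hmax C hBC (good_iff.1 ⟨hc, hcut⟩)⟩

lemma conn_singleton (G : SimpleGraph V) (a : V) : Conn G {a} := by
  refine ⟨⟨a, rfl⟩, ?_⟩
  rintro x rfl y rfl
  exact ⟨SimpleGraph.Walk.nil, by simp⟩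

lemma Conn.mono {G G' : SimpleGraph V} (h : G ≤ G') {S : Set V} (hS : Conn G S) :
    Conn G' S := by
  refine ⟨hS.1, fun a ha b hb => ?_⟩
  obtain ⟨w, hw⟩ := hS.2 a ha b hb
  refine ⟨w.mapLe h, fun x hx => ?_⟩
  rw [SimpleGraph.Walk.support_map] at hx
  obtain ⟨y, hy, rfl⟩ := List.mem_map.1 hx
  exact hw y hy

lemma Conn.union {G : SimpleGraph V} {S T : Set V} (hS : Conn G S) (hT : Conn G T)
    (h : (S ∩ T).Nonempty) : Conn G (S ∪ T) := by
  obtain ⟨c, hcS, hcT⟩ := h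
  have key : ∀ a ∈ S ∪ T, ∃ w : G.Walk a c, ∀ x ∈ w.support, x ∈ S ∪ T := by
    rintro a (ha | ha)
    · obtain ⟨w, hw⟩ := hS.2 a ha c hcS
      exact ⟨w, fun x hx => Or.inl (hw x hx)⟩
    · obtain ⟨w, hw⟩ := hT.2 a ha c hcT
      exact ⟨w, fun x hx => Or.inr (hw x hx)⟩
  refine ⟨⟨c, Or.inl hcS⟩, fun a ha b hb => ?_⟩
  obtain ⟨w1, h1⟩ := key a ha
  obtain ⟨w2, h2⟩ := key b hb
  refine ⟨w1.append w2.reverse, fun x hx => ?_⟩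
  rcases (SimpleGraph.Walk.mem_support_append_iff _ _).1 hx with hx | hx
  · exact h1 x hx
  · exact h2 x (by rwa [SimpleGraph.Walk.support_reverse, List.mem_reverse] at hx)

lemma Conn.union_adj {G : SimpleGraph V} {S T : Set V} (hS : Conn G S) (hT : Conn G T)
    {a b : V} (ha : a ∈ S) (hb : b ∈ T) (hab : G.Adj a b) : Conn G (S ∪ T) := by
  have key : ∀ u ∈ S ∪ T, ∃ w : G.Walk u a, ∀ x ∈ w.support, x ∈ S ∪ T := by
    rintro u (hu | hu)
    · obtain ⟨w, hw⟩ := hS.2 u hu a ha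
      exact ⟨w, fun x hx => Or.inl (hw x hx)⟩
    · obtain ⟨w, hw⟩ := hT.2 u hu b hb
      refine ⟨w.append (SimpleGraph.Walk.cons hab.symm SimpleGraph.Walk.nil), fun x hx => ?_⟩
      rcases (SimpleGraph.Walk.mem_support_append_iff _ _).1 hx with hx | hx
      · exact Or.inr (hw x hx)
      · simp at hx
        rcases hx with rfl | rfl
        · exact Or.inr (hw _ w.end_mem_support)
        · exact Or.inl ha
  refine ⟨⟨a, Or.inl ha⟩, fun u hu v hv => ?_⟩
  obtain ⟨w1, h1⟩ := key u hu
  obtain ⟨w2, h2⟩ := key v hv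
  refine ⟨w1.append w2.reverse, fun x hx => ?_⟩
  rcases (SimpleGraph.Walk.mem_support_append_iff _ _).1 hx with hx | hx
  · exact h1 x hx
  · exact h2 x (by rwa [SimpleGraph.Walk.support_reverse, List.mem_reverse] at hx)

lemma conn_of_pairwise {G : SimpleGraph V} {S : Set V} (h : S.Pairwise G.Adj)
    (hne : S.Nonempty) : Conn G S := by
  refine ⟨hne, fun a ha b hb => ?_⟩
  by_cases hab : a = b
  · subst hab; exact ⟨SimpleGraph.Walk.nil, by simpa using ha⟩
  · refine ⟨SimpleGraph.Walk.cons (h ha hb hab) SimpleGraph.Walk.nil, ?_⟩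
    intro x hx
    simp at hx
    rcases hx with rfl | rfl <;> assumption

lemma good_of_pairwise {G : SimpleGraph V} {S : Set V} (h : S.Pairwise G.Adj)
    {a b : V} (ha : a ∈ S) (hb : b ∈ S) (hab : a ≠ b) : Good G S := by
  refine ⟨conn_of_pairwise h ⟨a, ha⟩, fun x hx => ?_⟩
  refine conn_of_pairwise (h.mono Set.diff_subset) ?_
  by_cases hxa : x = a
  · refine ⟨b, hb, fun hbx => ?_⟩
    rw [Set.mem_singleton_iff] at hbx
    exact hab ((hbx.trans hxa).symm)
  · refine ⟨a, ha, fun hax => ?_⟩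
    rw [Set.mem_singleton_iff] at hax
    exact hxa hax.symm

lemma good_pair {G : SimpleGraph V} {a b : V} (h : G.Adj a b) : Good G {a, b} :=
  good_of_pairwise (Set.pairwise_pair.2 (fun _ => ⟨h, h.symm⟩)) (Set.mem_insert _ _)
    (Set.mem_insert_of_mem _ rfl) h.ne

lemma good_subset_block {G : SimpleGraph V} [Finite V] {T : Set V} (hT : Good G T) :
    ∃ B : Set V, IsBlock G B ∧ T ⊆ B := by
  classical
  have hfin : {C : Set V | T ⊆ C ∧ Good G C}.Finite := Set.toFinite _
  have hne : {C : Set V | T ⊆ C ∧ Good G C}.Nonempty := ⟨T, subset_rfl, hT⟩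
  obtain ⟨M, hM, hmax⟩ := Set.Finite.exists_maximalFor (fun C => C.ncard) _ hfin hne
  refine ⟨M, isBlock_iff.2 ⟨hM.2, fun C hMC hC => ?_⟩, hM.1⟩
  have hCs : C ∈ {C : Set V | T ⊆ C ∧ Good G C} := ⟨hM.1.trans hMC, hC⟩
  have hle : M.ncard ≤ C.ncard := Set.ncard_le_ncard hMC (Set.toFinite _)
  have heq := hmax hCs hle
  exact Set.eq_of_subset_of_ncard_le hMC heq (Set.toFinite _)

lemma good_pairwise {G : SimpleGraph V} [Finite V] (hG : IsBlockGraph G) {T : Set V}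
    (hT : Good G T) : T.Pairwise G.Adj := by
  obtain ⟨B, hB, hTB⟩ := good_subset_block hT
  exact (hG.2 B hB).mono hTB

lemma good_union_of_two {G : SimpleGraph V} {B B' : Set V} (hB : Good G B) (hB' : Good G B')
    {x y : V} (hx : x ∈ B ∩ B') (hy : y ∈ B ∩ B') (hxy : x ≠ y) : Good G (B ∪ B') := by
  refine ⟨hB.1.union hB'.1 ⟨x, hx⟩, fun t ht => ?_⟩
  have h1 : Conn G (B \ {t}) ∨ B \ {t} = B := by
    by_cases htB : t ∈ B
    · exact Or.inl (hB.2 t htB)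
    · exact Or.inr (Set.diff_singleton_eq_self htB)
  have h2 : Conn G (B' \ {t}) ∨ B' \ {t} = B' := by
    by_cases htB : t ∈ B'
    · exact Or.inl (hB'.2 t htB)
    · exact Or.inr (Set.diff_singleton_eq_self htB)
  have hc1 : Conn G (B \ {t}) := by
    rcases h1 with h | h
    · exact h
    · rw [h]; exact hB.1
  have hc2 : Conn G (B' \ {t}) := by
    rcases h2 with h | h
    · exact h
    · rw [h]; exact hB'.1
  have hint : ((B \ {t}) ∩ (B' \ {t})).Nonempty := by
    rcases eq_or_ne x t with rfl | hxt
    · exact ⟨y, ⟨hy.1, fun h => hxy ((Set.mem_singleton_iff.1 h).symm)⟩,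
        ⟨hy.2, fun h => hxy ((Set.mem_singleton_iff.1 h).symm)⟩⟩
    · exact ⟨x, ⟨hx.1, fun h => hxt (Set.mem_singleton_iff.1 h)⟩,
        ⟨hx.2, fun h => hxt (Set.mem_singleton_iff.1 h)⟩⟩
  have := hc1.union hc2 hint
  rwa [← Set.union_diff_distrib] at this

lemma block_inter_subsingleton {G : SimpleGraph V} {B B' : Set V}
    (hB : IsBlock G B) (hB' : IsBlock G B') (hne : B ≠ B') : (B ∩ B').Subsingleton := by
  rw [isBlock_iff] at hB hB'
  by_contra h
  rw [Set.not_subsingleton_iff] at h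
  obtain ⟨x, hx, y, hy, hxy⟩ := h
  have hgood := good_union_of_two hB.1 hB'.1 hx hy hxy
  have e1 := hB.2 (B ∪ B') Set.subset_union_left hgood
  have e2 := hB'.2 (B ∪ B') Set.subset_union_right hgood
  exact hne (e1.trans e2.symm)

lemma exists_block_of_adj {G : SimpleGraph V} [Finite V] {a p : V} (h : G.Adj a p) :
    ∃ B : Set V, IsBlock G B ∧ a ∈ B ∧ p ∈ B := by
  obtain ⟨B, hB, hsub⟩ := good_subset_block (good_pair h)
  exact ⟨B, hB, hsub (Set.mem_insert _ _), hsub (Set.mem_insert_of_mem _ rfl)⟩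

lemma conn_support {G : SimpleGraph V} {a b : V} (w : G.Walk a b) :
    Conn G {x | x ∈ w.support} := by
  classical
  refine ⟨⟨a, w.start_mem_support⟩, ?_⟩
  intro u hu v hv
  refine ⟨(w.takeUntil u hu).reverse.append (w.takeUntil v hv), fun x hx => ?_⟩
  rcases (SimpleGraph.Walk.mem_support_append_iff _ _).1 hx with hx | hx
  · rw [SimpleGraph.Walk.support_reverse, List.mem_reverse] at hx
    exact SimpleGraph.Walk.support_takeUntil_subset _ _ hx
  · exact SimpleGraph.Walk.support_takeUntil_subset _ _ hx

/-- Reachability avoiding a forbidden set. -/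
def AvoidReach (G : SimpleGraph V) (F : Set V) (s t : V) : Prop :=
  ∃ w : G.Walk s t, ∀ x ∈ w.support, x ∉ F

lemma AvoidReach.refl {G : SimpleGraph V} {F : Set V} {s : V} (hs : s ∉ F) :
    AvoidReach G F s s :=
  ⟨SimpleGraph.Walk.nil, by simpa using hs⟩

lemma AvoidReach.symm {G : SimpleGraph V} {F : Set V} {s t : V}
    (h : AvoidReach G F s t) : AvoidReach G F t s := by
  obtain ⟨w, hw⟩ := h
  exact ⟨w.reverse, fun x hx => hw x (by rwa [SimpleGraph.Walk.support_reverse, List.mem_reverse] at hx)⟩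

lemma AvoidReach.trans {G : SimpleGraph V} {F : Set V} {s t u : V}
    (h1 : AvoidReach G F s t) (h2 : AvoidReach G F t u) : AvoidReach G F s u := by
  obtain ⟨w1, hw1⟩ := h1
  obtain ⟨w2, hw2⟩ := h2
  refine ⟨w1.append w2, fun x hx => ?_⟩
  rcases (SimpleGraph.Walk.mem_support_append_iff _ _).1 hx with hx | hx
  · exact hw1 x hx
  · exact hw2 x hx

lemma AvoidReach.adj {G : SimpleGraph V} {F : Set V} {s t u : V}
    (h1 : AvoidReach G F s t) (h2 : G.Adj t u) (hu : u ∉ F) : AvoidReach G F s u := by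
  obtain ⟨w1, hw1⟩ := h1
  refine ⟨w1.append (SimpleGraph.Walk.cons h2 SimpleGraph.Walk.nil), fun x hx => ?_⟩
  rcases (SimpleGraph.Walk.mem_support_append_iff _ _).1 hx with hx | hx
  · exact hw1 x hx
  · simp at hx
    rcases hx with rfl | rfl
    · exact hw1 _ w1.end_mem_support
    · exact hu

lemma AvoidReach.not_mem_start {G : SimpleGraph V} {F : Set V} {s t : V}
    (h : AvoidReach G F s t) : s ∉ F := by
  obtain ⟨w, hw⟩ := h
  exact hw s w.start_mem_support

lemma AvoidReach.not_mem_end {G : SimpleGraph V} {F : Set V} {s t : V}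
    (h : AvoidReach G F s t) : t ∉ F := by
  obtain ⟨w, hw⟩ := h
  exact hw t w.end_mem_support

lemma AvoidReach.mono {G : SimpleGraph V} {F F' : Set V} (hFF : F' ⊆ F) {s t : V}
    (h : AvoidReach G F s t) : AvoidReach G F' s t := by
  obtain ⟨w, hw⟩ := h
  exact ⟨w, fun x hx hxF => hw x hx (hFF hxF)⟩

lemma exists_gate_of_walk {G : SimpleGraph V} {C : Set V} :
    ∀ {a c : V} (w : G.Walk a c), a ∉ C → c ∈ C →
    ∃ g ∈ C, g ∈ w.support ∧ ∃ t, AvoidReach G C a t ∧ G.Adj t g := by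
  intro a c w
  induction w with
  | nil => intro ha hc; exact absurd hc ha
  | @cons a x c h p ih =>
    intro ha hc
    by_cases hx : x ∈ C
    · exact ⟨x, hx, by simp, a, AvoidReach.refl ha, h⟩
    · obtain ⟨g, hg, hgsup, t, hreach, hadj⟩ := ih hx hc
      refine ⟨g, hg, by simp [hgsup], t, ?_, hadj⟩
      obtain ⟨wt, hwt⟩ := hreach
      refine ⟨SimpleGraph.Walk.cons h wt, fun y hy => ?_⟩
      rcases (by simpa [SimpleGraph.Walk.support_cons] using hy : y = a ∨ y ∈ wt.support) with rfl | hy'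
      · exact ha
      · exact hwt y hy'

lemma conn_support_diff_head {G : SimpleGraph V} :
    ∀ {a b : V} (p : G.Walk a b), p.support.Nodup → a ≠ b →
      Conn G ({x | x ∈ p.support} \ {a}) := by
  intro a b p
  cases p with
  | nil => intro _ hab; exact absurd rfl hab
  | @cons a x b h q =>
    intro hnodup _
    have ha : a ∉ q.support := by
      simp only [SimpleGraph.Walk.support_cons, List.nodup_cons] at hnodup
      exact hnodup.1
    have hset : ({y | y ∈ (SimpleGraph.Walk.cons h q).support} \ {a}) = {y | y ∈ q.support} := by
      ext y
      simp only [Set.mem_diff, Set.mem_setOf_eq, SimpleGraph.Walk.support_cons,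
        List.mem_cons, Set.mem_singleton_iff]
      constructor
      · rintro ⟨rfl | hy, hne⟩
        · exact absurd rfl hne
        · exact hy
      · intro hy
        exact ⟨Or.inr hy, fun hya => ha (hya ▸ hy)⟩
    rw [hset]
    exact conn_support q

lemma conn_support_diff_last {G : SimpleGraph V} {a b : V} (p : G.Walk a b)
    (hnodup : p.support.Nodup) (hab : a ≠ b) :
    Conn G ({x | x ∈ p.support} \ {b}) := by
  have h := conn_support_diff_head p.reverse
    (by rwa [SimpleGraph.Walk.support_reverse, List.nodup_reverse]) hab.symm
  have hset : ({x | x ∈ p.reverse.support} \ {b}) = ({x | x ∈ p.support} \ {b}) := by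
    ext y
    simp [SimpleGraph.Walk.support_reverse]
  rwa [hset] at h

lemma gate_subsingleton {G : SimpleGraph V} [Finite V] (hG : IsBlockGraph G)
    {C : Set V} (hC : IsBlock G C) {s : V} (hs : s ∉ C) :
    {g : V | g ∈ C ∧ ∃ t, AvoidReach G C s t ∧ G.Adj t g}.Subsingleton := by
  classical
  rintro g₁ ⟨hg₁C, t₁, hr₁, ha₁⟩ g₂ ⟨hg₂C, t₂, hr₂, ha₂⟩
  by_contra hne
  have hCpair : C.Pairwise G.Adj := hG.2 C hC
  have hgg : G.Adj g₁ g₂ := hCpair hg₁C hg₂C hne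
  obtain ⟨w₁, hw₁⟩ := hr₁
  obtain ⟨w₂, hw₂⟩ := hr₂
  have hfullsup : ∀ x ∈ (SimpleGraph.Walk.cons ha₁.symm ((w₁.reverse.append w₂).append
      (SimpleGraph.Walk.cons ha₂ SimpleGraph.Walk.nil)) : G.Walk g₁ g₂).support,
      x = g₁ ∨ x = g₂ ∨ x ∉ C := by
    intro x hx
    simp only [SimpleGraph.Walk.support_cons, List.mem_cons,
      SimpleGraph.Walk.mem_support_append_iff, SimpleGraph.Walk.support_reverse,
      List.mem_reverse, SimpleGraph.Walk.support_nil] at hx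
    rcases hx with rfl | (hx | hx) | (rfl | (rfl | hx))
    · exact Or.inl rfl
    · exact Or.inr (Or.inr (hw₁ x hx))
    · exact Or.inr (Or.inr (hw₂ x hx))
    · exact Or.inr (Or.inr (hw₂ _ w₂.end_mem_support))
    · exact Or.inr (Or.inl rfl)
    · simp at hx
  obtain ⟨P, hPsub, hPedges, hPpath⟩ :
      ∃ P : G.Walk g₁ g₂, P.support ⊆ (SimpleGraph.Walk.cons ha₁.symm ((w₁.reverse.append w₂).append
        (SimpleGraph.Walk.cons ha₂ SimpleGraph.Walk.nil)) : G.Walk g₁ g₂).support ∧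
        P.edges ⊆ (SimpleGraph.Walk.cons ha₁.symm ((w₁.reverse.append w₂).append
        (SimpleGraph.Walk.cons ha₂ SimpleGraph.Walk.nil)) : G.Walk g₁ g₂).edges ∧ P.IsPath :=
    ⟨_, SimpleGraph.Walk.support_bypass_subset _, SimpleGraph.Walk.edges_bypass_subset _,
      SimpleGraph.Walk.bypass_isPath _⟩
  have hnodup := hPpath.support_nodup
  -- the set W
  have hWgood : Good G {x | x ∈ P.support} := by
    refine ⟨conn_support P, fun x hx => ?_⟩
    rcases eq_or_ne x g₁ with rfl | hx1
    · exact conn_support_diff_head P hnodup hne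
    rcases eq_or_ne x g₂ with rfl | hx2
    · exact conn_support_diff_last P hnodup hne
    -- internal vertex
    have hxsup : x ∈ P.support := hx
    have hspec := P.take_spec hxsup
    have hsupp_eq : P.support = (P.takeUntil x hxsup).support ++ (P.dropUntil x hxsup).support.tail := by
      conv_lhs => rw [← hspec]
      exact SimpleGraph.Walk.support_append _ _
    have hnodup' := hnodup
    rw [hsupp_eq, List.nodup_append] at hnodup'
    obtain ⟨hnd1, hnd2t, hdisj⟩ := hnodup'
    have hq2cons : (P.dropUntil x hxsup).support = x :: (P.dropUntil x hxsup).support.tail :=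
      SimpleGraph.Walk.support_eq_cons _
    have hnd2 : (P.dropUntil x hxsup).support.Nodup := by
      rw [hq2cons]
      refine List.nodup_cons.2 ⟨?_, hnd2t⟩
      intro hxt
      exact hdisj _ ((P.takeUntil x hxsup).end_mem_support) _ hxt rfl
    have hT1 : Conn G ({y | y ∈ (P.takeUntil x hxsup).support} \ {x}) :=
      conn_support_diff_last _ hnd1 (Ne.symm hx1)
    have hT2 : Conn G ({y | y ∈ (P.dropUntil x hxsup).support} \ {x}) :=
      conn_support_diff_head _ hnd2 hx2
    have hg1T : g₁ ∈ ({y | y ∈ (P.takeUntil x hxsup).support} \ {x}) :=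
      ⟨(P.takeUntil x hxsup).start_mem_support, fun h => hx1 ((Set.mem_singleton_iff.1 h).symm)⟩
    have hg2T : g₂ ∈ ({y | y ∈ (P.dropUntil x hxsup).support} \ {x}) :=
      ⟨(P.dropUntil x hxsup).end_mem_support, fun h => hx2 ((Set.mem_singleton_iff.1 h).symm)⟩
    have hconn := hT1.union_adj hT2 hg1T hg2T hgg
    have hseteq : ({y | y ∈ (P.takeUntil x hxsup).support} \ {x}) ∪
        ({y | y ∈ (P.dropUntil x hxsup).support} \ {x}) = {y | y ∈ P.support} \ {x} := by
      ext y
      simp only [Set.mem_union, Set.mem_diff, Set.mem_setOf_eq, Set.mem_singleton_iff]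
      constructor
      · rintro (⟨hy, hyx⟩ | ⟨hy, hyx⟩)
        · exact ⟨SimpleGraph.Walk.support_takeUntil_subset _ _ hy, hyx⟩
        · exact ⟨SimpleGraph.Walk.support_dropUntil_subset _ _ hy, hyx⟩
      · rintro ⟨hy, hyx⟩
        rw [hsupp_eq, List.mem_append] at hy
        rcases hy with hy | hy
        · exact Or.inl ⟨hy, hyx⟩
        · refine Or.inr ⟨?_, hyx⟩
          rw [hq2cons]
          exact List.mem_cons_of_mem _ hy
    rwa [hseteq] at hconn
  obtain ⟨M, hM, hWM⟩ := good_subset_block hWgood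
  have hMC : M = C := by
    by_contra hMC
    have hsub := block_inter_subsingleton hM hC hMC
    exact hne (hsub ⟨hWM (P.start_mem_support), hg₁C⟩ ⟨hWM (P.end_mem_support), hg₂C⟩)
  -- second vertex of P lies outside C, contradiction
  cases P with
  | nil => exact hne rfl
  | @cons _ y _ h' q' =>
    have hedge : s(g₁, y) ∈ (SimpleGraph.Walk.cons ha₁.symm ((w₁.reverse.append w₂).append
        (SimpleGraph.Walk.cons ha₂ SimpleGraph.Walk.nil)) : G.Walk g₁ g₂).edges :=
      hPedges (by simp [SimpleGraph.Walk.edges_cons])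
    have hyC : y ∉ C := by
      simp only [SimpleGraph.Walk.edges_cons, SimpleGraph.Walk.edges_append,
        SimpleGraph.Walk.edges_reverse, List.mem_cons, List.mem_append, List.mem_reverse,
        SimpleGraph.Walk.edges_nil] at hedge
      rcases hedge with heq | (h1 | h2) | (heq2 | hnil)
      · rw [Sym2.eq_iff] at heq
        rcases heq with ⟨_, rfl⟩ | ⟨hgt, _⟩
        · exact hw₁ _ w₁.end_mem_support
        · exact absurd (hgt ▸ hg₁C) (hw₁ _ w₁.end_mem_support)
      · exact absurd hg₁C (hw₁ g₁ (SimpleGraph.Walk.fst_mem_support_of_mem_edges _ h1))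
      · exact absurd hg₁C (hw₂ g₁ (SimpleGraph.Walk.fst_mem_support_of_mem_edges _ h2))
      · rw [Sym2.eq_iff] at heq2
        rcases heq2 with ⟨hgt, _⟩ | ⟨hgg2, _⟩
        · exact absurd (hgt ▸ hg₁C) (hw₂ _ w₂.end_mem_support)
        · exact absurd hgg2 hne
      · simp at hnil
    have hyW : y ∈ {x | x ∈ (SimpleGraph.Walk.cons h' q').support} := by
      simp [SimpleGraph.Walk.support_cons]
    exact hyC (hMC ▸ hWM hyW)

/-- The graph obtained from `G` by completing the set `K` into a clique. -/
def completeOn (G : SimpleGraph V) (K : Set V) : SimpleGraph V where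
  Adj u v := G.Adj u v ∨ (u ≠ v ∧ u ∈ K ∧ v ∈ K)
  symm := by
    constructor
    rintro u v (h | ⟨h1, h2, h3⟩)
    · exact Or.inl h.symm
    · exact Or.inr ⟨h1.symm, h3, h2⟩
  loopless := by
    constructor
    rintro u (h | ⟨h1, _, _⟩)
    · exact G.irrefl h
    · exact h1 rfl

lemma le_completeOn (G : SimpleGraph V) (K : Set V) : G ≤ completeOn G K :=
  fun _ _ h => Or.inl h

lemma completeOn_adj {G : SimpleGraph V} {K : Set V} {u v : V} :
    (completeOn G K).Adj u v ↔ G.Adj u v ∨ (u ≠ v ∧ u ∈ K ∧ v ∈ K) := Iff.rfl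

lemma AR_of_clique {G : SimpleGraph V} {C : Set V} (hpair : C.Pairwise G.Adj)
    {a b z : V} (ha : a ∈ C) (hb : b ∈ C) (haz : a ≠ z) (hbz : b ≠ z) :
    AvoidReach G {z} a b := by
  rcases eq_or_ne a b with rfl | hab
  · exact AvoidReach.refl (by simpa using haz)
  · exact (AvoidReach.refl (by simpa using haz)).adj (hpair ha hb hab) (by simpa using hbz)

lemma walk_closure {H : SimpleGraph V} (P : V → Prop) (Q : Set V)
    (hstep : ∀ x y, x ∈ Q → y ∈ Q → P x → H.Adj x y → P y) :
    ∀ {a b : V} (w : H.Walk a b), (∀ x ∈ w.support, x ∈ Q) → P a → P b := by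
  intro a b w
  induction w with
  | nil => exact fun _ h => h
  | @cons a c b h p ih =>
    intro hsup ha
    have haQ : a ∈ Q := hsup a (by simp [SimpleGraph.Walk.support_cons])
    have hcQ : c ∈ Q := hsup c (by simp [SimpleGraph.Walk.support_cons])
    exact ih (fun x hx => hsup x (by simp [SimpleGraph.Walk.support_cons, hx]))
      (hstep a c haQ hcQ ha h)

lemma conn_transfer {G G' : SimpleGraph V} {S T : Set V} (hTS : T ⊆ S)
    (hadj : ∀ a ∈ S, ∀ b ∈ S, G'.Adj a b → G.Adj a b) (h : Conn G' T) : Conn G T := by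
  refine ⟨h.1, fun a ha b hb => ?_⟩
  obtain ⟨w, hw⟩ := h.2 a ha b hb
  clear ha hb
  induction w with
  | nil => exact ⟨SimpleGraph.Walk.nil, hw⟩
  | @cons a c b hac p ih =>
    have haT : a ∈ T := hw a (by simp [SimpleGraph.Walk.support_cons])
    have hcT : c ∈ T := hw c (by simp [SimpleGraph.Walk.support_cons])
    obtain ⟨w', hw'⟩ := ih (fun x hx => hw x (by simp [SimpleGraph.Walk.support_cons, hx]))
    refine ⟨SimpleGraph.Walk.cons (hadj a (hTS haT) c (hTS hcT) hac) w', fun x hx => ?_⟩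
    rcases (by simpa [SimpleGraph.Walk.support_cons] using hx : x = a ∨ x ∈ w'.support) with rfl | hx'
    · exact haT
    · exact hw' x hx'

section BlockSetup

variable {G : SimpleGraph V} [Finite V] (hG : IsBlockGraph G)
variable {C₁ C₂ : Set V} (hC₁ : IsBlock G C₁) (hC₂ : IsBlock G C₂) (hC : C₁ ≠ C₂)
variable {z : V} (hz₁ : z ∈ C₁) (hz₂ : z ∈ C₂)

include hG hC₁ hC₂ hC hz₁ hz₂

lemma mem_both_eq : ∀ x, x ∈ C₁ → x ∈ C₂ → x = z := by
  intro x h1 h2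
  exact block_inter_subsingleton hC₁ hC₂ hC ⟨h1, h2⟩ ⟨hz₁, hz₂⟩

lemma sides_separated : ∀ u v : V, u ∈ C₁ → u ≠ z → v ∈ C₂ → v ≠ z →
    ¬ AvoidReach G {z} u v := by
  intro u v hu huz hv hvz hr
  have huC₂ : u ∉ C₂ := fun h => huz (mem_both_eq hG hC₁ hC₂ hC hz₁ hz₂ u hu h)
  obtain ⟨w, hw⟩ := hr
  obtain ⟨g, hgC, hgsup, t, hreach, hadj⟩ := exists_gate_of_walk (C := C₂) w huC₂ hv
  have hzgate : z ∈ {g : V | g ∈ C₂ ∧ ∃ t, AvoidReach G C₂ u t ∧ G.Adj t g} := by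
    refine ⟨hz₂, u, AvoidReach.refl huC₂, ?_⟩
    exact (hG.2 C₁ hC₁) hu hz₁ huz
  have hggate : g ∈ {g : V | g ∈ C₂ ∧ ∃ t, AvoidReach G C₂ u t ∧ G.Adj t g} :=
    ⟨hgC, t, hreach, hadj⟩
  have := gate_subsingleton hG hC₂ huC₂ hggate hzgate
  exact (hw g hgsup) (by simp [this])


lemma caseB_contra {G' : SimpleGraph V} {K : Set V} (hK : K = C₁ ∪ C₂)
    (hadj : ∀ a b, G'.Adj a b ↔ (G.Adj a b ∨ (a ≠ b ∧ a ∈ K ∧ b ∈ K)))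
    {S : Set V} (hS : Good G' S)
    {u v s₀ : V} (hu : u ∈ S) (hu1 : u ∈ C₁) (huz : u ≠ z)
    (hv2 : v ∈ C₂) (hvz : v ≠ z)
    (hs : s₀ ∈ S) (hsK : s₀ ∉ K) (hsv : AvoidReach G {z} s₀ v) : False := by
  classical
  have hpair1 : C₁.Pairwise G.Adj := hG.2 C₁ hC₁
  have hs2 : s₀ ∉ C₂ := fun h => hsK (hK ▸ Set.mem_union_right _ h)
  have huC2 : u ∉ C₂ := fun h => huz (mem_both_eq hG hC₁ hC₂ hC hz₁ hz₂ u hu1 h)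
  have hnotAR : ¬ AvoidReach G {z} s₀ u := by
    intro h
    exact sides_separated hG hC₁ hC₂ hC hz₁ hz₂ u v hu1 huz hv2 hvz (h.symm.trans hsv)
  have hCcK : ∀ t, AvoidReach G C₂ s₀ t → t ∉ K := by
    intro t ht hKt
    have htC2 : t ∉ C₂ := ht.not_mem_end
    have htz : t ≠ z := fun h => htC2 (h ▸ hz₂)
    have htC1 : t ∈ C₁ := by
      rcases hK ▸ hKt with h | h
      · exact h
      · exact absurd h htC2
    have h1 : AvoidReach G {z} s₀ t := ht.mono (by simpa [Set.singleton_subset_iff] using hz₂)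
    exact hnotAR (h1.trans (AR_of_clique hpair1 htC1 hu1 htz huz))
  have hgate := gate_subsingleton hG hC₂ hs2
  by_cases hEx : ∃ g, (g ∈ C₂ ∧ ∃ t, AvoidReach G C₂ s₀ t ∧ G.Adj t g) ∧ g ∈ S
  · obtain ⟨g, hgGate, hgS⟩ := hEx
    have hconn : Conn G' (S \ {g}) := hS.2 g hgS
    have hsg : s₀ ∈ S \ {g} := ⟨hs, fun h => hs2 ((Set.mem_singleton_iff.1 h) ▸ hgGate.1)⟩
    have hug : u ∈ S \ {g} := ⟨hu, fun h => huC2 ((Set.mem_singleton_iff.1 h) ▸ hgGate.1)⟩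
    obtain ⟨w, hw⟩ := hconn.2 s₀ hsg u hug
    have hstep : ∀ x y, x ∈ S \ {g} → y ∈ S \ {g} → AvoidReach G C₂ s₀ x → G'.Adj x y →
        AvoidReach G C₂ s₀ y := by
      intro x y _ hyQ hx hxy
      have hxK : x ∉ K := hCcK x hx
      have hGxy : G.Adj x y := by
        rcases (hadj x y).1 hxy with h | ⟨_, hxK', _⟩
        · exact h
        · exact absurd hxK' hxK
      by_cases hyC2 : y ∈ C₂
      · exfalso
        have : y ∈ {g : V | g ∈ C₂ ∧ ∃ t, AvoidReach G C₂ s₀ t ∧ G.Adj t g} :=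
          ⟨hyC2, x, hx, hGxy⟩
        have hyg : y = g := hgate this hgGate
        exact hyQ.2 (by simp [hyg])
      · exact hx.adj hGxy hyC2
    exact hnotAR ((walk_closure _ _ hstep w hw (AvoidReach.refl hs2)).mono
      (by simpa [Set.singleton_subset_iff] using hz₂))
  · obtain ⟨w, hw⟩ := hS.1.2 s₀ hs u hu
    have hstep : ∀ x y, x ∈ S → y ∈ S → AvoidReach G C₂ s₀ x → G'.Adj x y →
        AvoidReach G C₂ s₀ y := by
      intro x y _ hyS hx hxy
      have hxK : x ∉ K := hCcK x hx
      have hGxy : G.Adj x y := by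
        rcases (hadj x y).1 hxy with h | ⟨_, hxK', _⟩
        · exact h
        · exact absurd hxK' hxK
      by_cases hyC2 : y ∈ C₂
      · exact absurd ⟨y, ⟨hyC2, x, hx, hGxy⟩, hyS⟩ hEx
      · exact hx.adj hGxy hyC2
    exact hnotAR ((walk_closure _ _ hstep w hw (AvoidReach.refl hs2)).mono
      (by simpa [Set.singleton_subset_iff] using hz₂))

lemma good_completeOn_pairwise {G' : SimpleGraph V} {K : Set V} (hK : K = C₁ ∪ C₂)
    (hadj : ∀ a b, G'.Adj a b ↔ (G.Adj a b ∨ (a ≠ b ∧ a ∈ K ∧ b ∈ K)))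
    {S : Set V} (hS : Good G' S) : S.Pairwise G'.Adj := by
  classical
  have hpair1 : C₁.Pairwise G.Adj := hG.2 C₁ hC₁
  have hpair2 : C₂.Pairwise G.Adj := hG.2 C₂ hC₂
  by_cases hcase : (∃ u, u ∈ S ∧ u ∈ C₁ ∧ u ≠ z) ∧ (∃ v, v ∈ S ∧ v ∈ C₂ ∧ v ≠ z)
  · obtain ⟨⟨u, huS, hu1, huz⟩, ⟨v, hvS, hv2, hvz⟩⟩ := hcase
    have hSK : S ⊆ K := by
      intro s₀ hs₀
      by_contra hsK
      have hsz : s₀ ≠ z := fun h => hsK (hK ▸ Set.mem_union_left _ (h ▸ hz₁))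
      have hconnz : Conn G' (S \ {z}) := by
        by_cases hzS : z ∈ S
        · exact hS.2 z hzS
        · rw [Set.diff_singleton_eq_self hzS]; exact hS.1
      obtain ⟨w, hw⟩ := hconnz.2 v ⟨hvS, by simpa using hvz⟩ s₀ ⟨hs₀, by simpa using hsz⟩
      have hstep : ∀ x y, x ∈ S \ {z} → y ∈ S \ {z} →
          (AvoidReach G {z} x u ∨ AvoidReach G {z} x v) → G'.Adj x y →
          (AvoidReach G {z} y u ∨ AvoidReach G {z} y v) := by
        intro x y hxQ hyQ hPx hxy
        have hxz : x ≠ z := by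
          intro h; exact (by simpa using hxQ.2 : x ≠ z) h
        have hyz : y ≠ z := by
          intro h; exact (by simpa using hyQ.2 : y ≠ z) h
        by_cases hyK : y ∈ K
        · rcases hK ▸ hyK with hy1 | hy2
          · exact Or.inl (AR_of_clique hpair1 hy1 hu1 hyz huz)
          · exact Or.inr (AR_of_clique hpair2 hy2 hv2 hyz hvz)
        · have hGxy : G.Adj x y := by
            rcases (hadj x y).1 hxy with h | ⟨_, _, hyK'⟩
            · exact h
            · exact absurd hyK' hyK
          have hyx : AvoidReach G {z} y x :=
            (AvoidReach.refl (by simpa using hyz)).adj hGxy.symm (by simpa using hxz)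
          rcases hPx with h | h
          · exact Or.inl (hyx.trans h)
          · exact Or.inr (hyx.trans h)
      have hside := walk_closure _ _ hstep w hw
        (Or.inr (AvoidReach.refl (by simpa using hvz)))
      rcases hside with h | h
      · exact caseB_contra hG hC₂ hC₁ (Ne.symm hC) hz₂ hz₁
          (hK.trans (Set.union_comm _ _)) hadj hS hvS hv2 hvz hu1 huz hs₀ hsK h
      · exact caseB_contra hG hC₁ hC₂ hC hz₁ hz₂ hK hadj hS huS hu1 huz hv2 hvz hs₀ hsK h
    intro a ha b hb hab
    exact (hadj a b).2 (Or.inr ⟨hab, hSK ha, hSK hb⟩)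
  · have hagree : ∀ a ∈ S, ∀ b ∈ S, G'.Adj a b → G.Adj a b := by
      intro a ha b hb hab
      rcases (hadj a b).1 hab with h | ⟨hne', haK, hbK⟩
      · exact h
      rcases hK ▸ haK with ha1 | ha2 <;> rcases hK ▸ hbK with hb1 | hb2
      · exact hpair1 ha1 hb1 hne'
      · rcases eq_or_ne a z with rfl | haz
        · exact hpair2 hz₂ hb2 hne'
        · rcases eq_or_ne b z with rfl | hbz
          · exact hpair1 ha1 hz₁ hne'
          · exact absurd ⟨⟨a, ha, ha1, haz⟩, ⟨b, hb, hb2, hbz⟩⟩ hcase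
      · rcases eq_or_ne a z with rfl | haz
        · exact hpair1 hz₁ hb1 hne'
        · rcases eq_or_ne b z with rfl | hbz
          · exact hpair2 ha2 hz₂ hne'
          · exact absurd ⟨⟨b, hb, hb1, hbz⟩, ⟨a, ha, ha2, haz⟩⟩ hcase
      · exact hpair2 ha2 hb2 hne'
    have hGoodG : Good G S :=
      ⟨conn_transfer subset_rfl hagree hS.1,
        fun x hx => conn_transfer Set.diff_subset hagree (hS.2 x hx)⟩
    exact (good_pairwise hG hGoodG).mono' (fun a b hab => (hadj a b).2 (Or.inl hab))


lemma completeOn_isBlockGraph :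
    IsBlockGraph (completeOn G (C₁ ∪ C₂)) := by
  constructor
  · exact SimpleGraph.Connected.mono (le_completeOn _ _) hG.1
  · intro B hB
    exact good_completeOn_pairwise hG hC₁ hC₂ hC hz₁ hz₂ rfl (fun a b => Iff.rfl)
      (isBlock_iff.1 hB).1

lemma exists_nonadj_in_union :
    ∃ a b : V, a ∈ C₁ ∪ C₂ ∧ b ∈ C₁ ∪ C₂ ∧ a ≠ b ∧ ¬ G.Adj a b := by
  by_contra h
  push_neg at h
  have hpairK : (C₁ ∪ C₂).Pairwise G.Adj := fun a ha b hb hab => h a b ha hb hab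
  have hgood1 : Good G C₁ := (isBlock_iff.1 hC₁).1
  obtain ⟨u, hu⟩ := (hgood1.2 z hz₁).1
  have hKgood : Good G (C₁ ∪ C₂) := good_of_pairwise hpairK
    (Set.mem_union_left _ hu.1) (Set.mem_union_left _ hz₁) (by simpa using hu.2)
  have e1 := (isBlock_iff.1 hC₁).2 _ Set.subset_union_left hKgood
  have e2 := (isBlock_iff.1 hC₂).2 _ Set.subset_union_right hKgood
  exact hC (e1.trans e2.symm)

end BlockSetup

lemma isDissoc_mono [Finite V] {G G' : SimpleGraph V} (hle : G ≤ G') {D : Set V}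
    (hD : IsDissoc G' D) : IsDissoc G D := by
  intro v hv
  refine le_trans (Set.ncard_le_ncard ?_ (Set.toFinite _)) (hD v hv)
  rintro u ⟨huD, hadj⟩
  exact ⟨huD, hle hadj⟩

lemma isDissoc_completeOn_of [Finite V] {G : SimpleGraph V} {K D : Set V} (hD : IsDissoc G D)
    (h : ∀ v ∈ D, v ∈ K → (D ∩ {u | (completeOn G K).Adj v u}).ncard ≤ 1) :
    IsDissoc (completeOn G K) D := by
  intro v hv
  by_cases hvK : v ∈ K
  · exact h v hv hvK
  · refine le_trans (Set.ncard_le_ncard ?_ (Set.toFinite _)) (hD v hv)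
    rintro u ⟨huD, hadj⟩
    rcases hadj with hadj | ⟨_, hvK', _⟩
    · exact ⟨huD, hadj⟩
    · exact absurd hvK' hvK

lemma dissocNum_eq_of {V : Type*} [Fintype V] {G G' : SimpleGraph V} (hle : G ≤ G') {D : Set V}
    (hD : IsMaxDissoc G D) (hD' : IsDissoc G' D) : dissocNum G' = dissocNum G := by
  classical
  have hbdd : ∀ (H : SimpleGraph V), BddAbove {n : ℕ | ∃ D : Set V, IsDissoc H D ∧ D.ncard = n} := by
    intro H
    refine ⟨Fintype.card V, ?_⟩
    rintro n ⟨D'', _, rfl⟩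
    simpa [Set.ncard_univ] using Set.ncard_le_ncard (Set.subset_univ D'') (Set.toFinite _)
  have hub : ∀ n ∈ {n : ℕ | ∃ D : Set V, IsDissoc G' D ∧ D.ncard = n}, n ≤ dissocNum G := by
    rintro n ⟨D'', hD'', rfl⟩
    exact le_csSup (hbdd G) ⟨D'', isDissoc_mono hle hD'', rfl⟩
  refine le_antisymm (csSup_le ⟨D.ncard, D, hD', rfl⟩ hub) ?_
  have : dissocNum G ∈ {n : ℕ | ∃ D : Set V, IsDissoc G' D ∧ D.ncard = n} := ⟨D, hD', hD.2⟩
  exact le_csSup (hbdd G') this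

section Spectral

open scoped RealInnerProductSpace

variable [Fintype V]

lemma adjMat_nonneg (G : SimpleGraph V) (i j : V) : 0 ≤ adjMat G i j := by
  unfold adjMat
  simp only [Matrix.of_apply]
  split <;> norm_num

lemma adjMat_symm (G : SimpleGraph V) (i j : V) : adjMat G i j = adjMat G j i := by
  unfold adjMat
  simp only [Matrix.of_apply]
  by_cases h : G.Adj i j
  · simp [h, h.symm]
  · have h' : ¬ G.Adj j i := fun hj => h hj.symm
    simp [h, h']

lemma adjMat_le {G G' : SimpleGraph V} (hle : G ≤ G') (i j : V) :
    adjMat G i j ≤ adjMat G' i j := by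
  unfold adjMat
  simp only [Matrix.of_apply]
  by_cases h : G.Adj i j
  · simp [h, hle h]
  · simp only [h, if_false]
    split <;> norm_num

lemma adjMat_of_adj {G : SimpleGraph V} {i j : V} (h : G.Adj i j) : adjMat G i j = 1 := by
  unfold adjMat; simp [h]

lemma double_sym (A : Matrix V V ℝ) (hsym : ∀ i j, A i j = A j i) (u v : V → ℝ) :
    ∑ i, ∑ j, A i j * u j * v i = ∑ i, ∑ j, A i j * v j * u i := by
  rw [Finset.sum_comm]
  refine Finset.sum_congr rfl fun i _ => Finset.sum_congr rfl fun j _ => ?_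
  rw [hsym j i]; ring

/-- The main spectral input: a nonnegative eigenvector for the spectral radius
together with the Rayleigh bound. -/
lemma spectral_main [Nonempty V] (G : SimpleGraph V) :
    ∃ y : V → ℝ, (∀ i, 0 ≤ y i) ∧ y ≠ 0 ∧ (adjMat G).mulVec y = specRad G • y ∧
      ∀ x : V → ℝ, ∑ i, ∑ j, adjMat G i j * x j * x i ≤ specRad G * (∑ i, x i ^ 2) := by
  classical
  set A := adjMat G with hA
  set T : EuclideanSpace ℝ V →L[ℝ] EuclideanSpace ℝ V :=
    LinearMap.toContinuousLinearMap (Matrix.toEuclideanLin A) with hT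
  have hTapp : ∀ x : EuclideanSpace ℝ V, ∀ i, T x i = A.mulVec (fun j => x j) i := by
    intro x i
    rfl
  have hinner : ∀ u v : EuclideanSpace ℝ V, (inner ℝ (u) (v) : ℝ) = ∑ i, u i * v i := by
    intro u v
    rw [PiLp.inner_apply]
    simp [RCLike.inner_apply]
    exact Finset.sum_congr rfl fun i _ => mul_comm _ _
  have hTinner : ∀ u v : EuclideanSpace ℝ V, (inner ℝ (T u) (v) : ℝ) = ∑ i, ∑ j, A i j * u j * v i := by
    intro u v
    rw [hinner]
    refine Finset.sum_congr rfl fun i _ => ?_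
    rw [hTapp u i, Matrix.mulVec, dotProduct, Finset.sum_mul]
  have hnormsq : ∀ x : EuclideanSpace ℝ V, ‖x‖ ^ 2 = ∑ i, x i ^ 2 := by
    intro x
    rw [← real_inner_self_eq_norm_sq, hinner]
    exact Finset.sum_congr rfl fun i _ => (pow_two (x i)).symm
  have hquad : ∀ x : EuclideanSpace ℝ V, T.reApplyInnerSelf x = ∑ i, ∑ j, A i j * x j * x i := by
    intro x
    rw [ContinuousLinearMap.reApplyInnerSelf_apply]
    exact hTinner x x
  have hselfadj : IsSelfAdjoint T := by
    rw [ContinuousLinearMap.isSelfAdjoint_iff_isSymmetric]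
    intro u v
    have h1 : (inner ℝ ((T : EuclideanSpace ℝ V →ₗ[ℝ] EuclideanSpace ℝ V) u) (v) : ℝ)
        = ∑ i, ∑ j, A i j * u j * v i := hTinner u v
    have h2 : (inner ℝ (u) ((T : EuclideanSpace ℝ V →ₗ[ℝ] EuclideanSpace ℝ V) v) : ℝ)
        = ∑ i, ∑ j, A i j * u j * v i := by
      have e : ((T : EuclideanSpace ℝ V →ₗ[ℝ] EuclideanSpace ℝ V) v) = T v := rfl
      rw [e, real_inner_comm, hTinner v u]
      exact (double_sym A (adjMat_symm G) u v).symm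
    rw [h1, h2]
  obtain ⟨x₀, hx₀s, hx₀max⟩ := (isCompact_sphere (0 : EuclideanSpace ℝ V) 1).exists_isMaxOn
    (NormedSpace.sphere_nonempty.2 zero_le_one) T.reApplyInnerSelf_continuous.continuousOn
  have hx₀norm : ‖x₀‖ = 1 := by simpa using mem_sphere_zero_iff_norm.1 hx₀s
  set y : EuclideanSpace ℝ V := WithLp.toLp 2 (fun i => |x₀ i| : V → ℝ) with hy
  have hynorm : ‖y‖ = 1 := by
    rw [EuclideanSpace.norm_eq] at hx₀norm ⊢
    simpa [hy, abs_abs] using hx₀norm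
  have hys : y ∈ Metric.sphere (0 : EuclideanSpace ℝ V) 1 := mem_sphere_zero_iff_norm.2 hynorm
  have hmono : T.reApplyInnerSelf x₀ ≤ T.reApplyInnerSelf y := by
    rw [hquad, hquad]
    refine Finset.sum_le_sum fun i _ => Finset.sum_le_sum fun j _ => ?_
    calc A i j * x₀ j * x₀ i ≤ |A i j * x₀ j * x₀ i| := le_abs_self _
      _ = A i j * |x₀ j| * |x₀ i| := by
          rw [abs_mul, abs_mul, abs_of_nonneg (adjMat_nonneg G i j)]
      _ = A i j * y j * y i := rfl
  have hymax : IsMaxOn T.reApplyInnerSelf (Metric.sphere (0 : EuclideanSpace ℝ V) 1) y :=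
    fun z hz => le_trans (hx₀max hz) hmono
  have hy0 : y ≠ 0 := by
    intro h
    rw [h] at hynorm
    simp at hynorm
  have heig := hselfadj.hasEigenvector_of_isMaxOn hy0 (by rwa [hynorm])
  set c : ℝ := (⨆ x : {x : EuclideanSpace ℝ V // x ≠ 0}, T.rayleighQuotient x) with hcdef
  have heq : T y = c • y := by
    have := heig.1
    rw [Module.End.mem_eigenspace_iff] at this
    exact this
  set μ : ℝ := T.reApplyInnerSelf y with hμ
  have hc : c = μ := by
    have h1 : (inner ℝ (T y) (y) : ℝ) = c * (inner ℝ (y) (y) : ℝ) := by rw [heq, real_inner_smul_left]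
    have h2 : (inner ℝ (y) (y) : ℝ) = 1 := by
      rw [real_inner_self_eq_norm_sq, hynorm]; norm_num
    rw [hμ, ContinuousLinearMap.reApplyInnerSelf_apply]
    rw [show RCLike.re (inner ℝ (T y) (y) : ℝ) = (inner ℝ (T y) (y) : ℝ) from rfl, h1, h2, mul_one]
  have hray : ∀ x : EuclideanSpace ℝ V, (inner ℝ (T x) (x) : ℝ) ≤ μ * ‖x‖ ^ 2 := by
    intro x
    rcases eq_or_ne x 0 with rfl | hx0
    · simp
    · have hn : ‖x‖ ≠ 0 := norm_ne_zero_iff.2 hx0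
      have hxhat : (‖x‖⁻¹ • x) ∈ Metric.sphere (0 : EuclideanSpace ℝ V) 1 := by
        rw [mem_sphere_zero_iff_norm, norm_smul]
        simp [abs_of_nonneg (inv_nonneg.2 (norm_nonneg x)), inv_mul_cancel₀ hn]
      have hle : T.reApplyInnerSelf ((‖x‖⁻¹ : ℝ) • x) ≤ T.reApplyInnerSelf y := hymax hxhat
      rw [ContinuousLinearMap.reApplyInnerSelf_smul] at hle
      have : ‖(‖x‖⁻¹ : ℝ)‖ ^ 2 * T.reApplyInnerSelf x ≤ μ := hle
      rw [ContinuousLinearMap.reApplyInnerSelf_apply] at this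
      have hre : RCLike.re (inner ℝ (T x) (x) : ℝ) = (inner ℝ (T x) (x) : ℝ) := rfl
      rw [hre] at this
      have hnorminv : ‖(‖x‖⁻¹ : ℝ)‖ ^ 2 = (‖x‖ ^ 2)⁻¹ := by
        rw [Real.norm_eq_abs, abs_of_nonneg (inv_nonneg.2 (norm_nonneg x))]
        rw [sq, sq, mul_inv]
      rw [hnorminv] at this
      have hpos : (0 : ℝ) < ‖x‖ ^ 2 := by positivity
      calc (inner ℝ (T x) (x) : ℝ) = (‖x‖ ^ 2) * ((‖x‖ ^ 2)⁻¹ * (inner ℝ (T x) (x) : ℝ)) := by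
            field_simp
        _ ≤ (‖x‖ ^ 2) * μ := by
            exact mul_le_mul_of_nonneg_left this (le_of_lt hpos)
        _ = μ * ‖x‖ ^ 2 := mul_comm _ _
  have hub : ∀ r ∈ {r : ℝ | ∃ x : V → ℝ, x ≠ 0 ∧ A.mulVec x = r • x}, r ≤ μ := by
    rintro r ⟨x, hx0, hxe⟩
    have hxE0 : (WithLp.toLp 2 x : EuclideanSpace ℝ V) ≠ 0 := fun h => hx0 (congrArg WithLp.ofLp h)
    have hTx : (inner ℝ (T (WithLp.toLp 2 x : EuclideanSpace ℝ V)) ((WithLp.toLp 2 x : EuclideanSpace ℝ V)) : ℝ) = r * ∑ i, x i ^ 2 := by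
      rw [hinner]
      have : ∀ i, T (WithLp.toLp 2 x : EuclideanSpace ℝ V) i = r * x i := by
        intro i
        rw [hTapp]
        have := congrFun hxe i
        simpa using this
      rw [Finset.sum_congr rfl fun i _ => by rw [this i]]
      rw [Finset.mul_sum]
      exact Finset.sum_congr rfl fun i _ => by ring
    have := hray (WithLp.toLp 2 x : EuclideanSpace ℝ V)
    rw [hTx, hnormsq] at this
    have hpos : (0 : ℝ) < ∑ i, x i ^ 2 := by
      by_contra hc'
      push_neg at hc'
      have hz : ∑ i, x i ^ 2 = 0 :=
        le_antisymm hc' (Finset.sum_nonneg fun i _ => sq_nonneg _)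
      have : ∀ i ∈ Finset.univ, x i ^ 2 = 0 :=
        (Finset.sum_eq_zero_iff_of_nonneg (fun i _ => sq_nonneg (x i))).1 hz
      exact hx0 (funext fun i => by simpa [pow_eq_zero_iff] using this i (Finset.mem_univ i))
    exact le_of_mul_le_mul_right (by linarith) hpos
  have hmem : μ ∈ {r : ℝ | ∃ x : V → ℝ, x ≠ 0 ∧ A.mulVec x = r • x} := by
    refine ⟨(y : V → ℝ), fun h => hy0 (congrArg (WithLp.toLp 2) h), funext fun i => ?_⟩
    have h1 : A.mulVec (fun j => y j) i = T y i := (hTapp y i).symm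
    have h2 : T y i = c * y i := by rw [heq]; rfl
    rw [show (A.mulVec (y : V → ℝ)) i = A.mulVec (fun j => y j) i from rfl, h1, h2, hc]
    rfl
  have hspec : specRad G = μ := le_antisymm (csSup_le ⟨μ, hmem⟩ hub) (le_csSup ⟨μ, hub⟩ hmem)
  refine ⟨(fun i => |x₀ i|), fun i => abs_nonneg _, fun h => hy0 (congrArg (WithLp.toLp 2) h), ?_, ?_⟩
  · obtain ⟨x', hx'0, hx'e⟩ := hmem
    rw [hspec]
    refine funext fun i => ?_
    have h1 : A.mulVec (fun j => y j) i = T y i := (hTapp y i).symm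
    have h2 : T y i = c * y i := by rw [heq]; rfl
    rw [show ((adjMat G).mulVec fun i => |x₀ i|) = A.mulVec (fun j => y j) from rfl]
    rw [h1, h2, hc]
    rfl
  · intro x
    have := hray (WithLp.toLp 2 x : EuclideanSpace ℝ V)
    rw [hTinner, hnormsq] at this
    rw [hspec]
    exact this



lemma eigen_sum {G : SimpleGraph V} [Fintype V] {y : V → ℝ} {ρ : ℝ}
    (he : (adjMat G).mulVec y = ρ • y) :
    ∑ i, ∑ j, adjMat G i j * y j * y i = ρ * ∑ i, y i ^ 2 := by
  have hrow : ∀ i, ∑ j, adjMat G i j * y j = ρ * y i := by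
    intro i
    have := congrFun he i
    simpa [Matrix.mulVec, dotProduct] using this
  calc ∑ i, ∑ j, adjMat G i j * y j * y i
      = ∑ i, (∑ j, adjMat G i j * y j) * y i :=
        Finset.sum_congr rfl fun i _ => (Finset.sum_mul _ _ _).symm
    _ = ∑ i, (ρ * y i) * y i := Finset.sum_congr rfl fun i _ => by rw [hrow i]
    _ = ρ * ∑ i, y i ^ 2 := by
        rw [Finset.mul_sum]
        exact Finset.sum_congr rfl fun i _ => by ring

lemma perron_pos {G : SimpleGraph V} [Fintype V] (hpre : G.Preconnected) {y : V → ℝ} {ρ : ℝ}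
    (hnn : ∀ i, 0 ≤ y i) (hy0 : y ≠ 0) (he : (adjMat G).mulVec y = ρ • y) :
    ∀ i, 0 < y i := by
  classical
  obtain ⟨i₀, hi₀⟩ : ∃ i, y i ≠ 0 := Function.ne_iff.1 hy0
  have hi₀pos : 0 < y i₀ := lt_of_le_of_ne (hnn i₀) (Ne.symm hi₀)
  have hrow : ∀ i, ∑ j, adjMat G i j * y j = ρ * y i := by
    intro i
    have := congrFun he i
    simpa [Matrix.mulVec, dotProduct] using this
  intro t
  obtain ⟨w⟩ := hpre i₀ t
  refine walk_closure (H := G) (fun v => 0 < y v) Set.univ ?_ w (fun x _ => Set.mem_univ x) hi₀pos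
  intro x c _ _ hx hadj
  by_contra hc
  push_neg at hc
  have hc0 : y c = 0 := le_antisymm hc (hnn c)
  have h1 : ∑ j, adjMat G c j * y j = 0 := by rw [hrow c, hc0, mul_zero]
  have h2 : adjMat G c x * y x ≤ ∑ j, adjMat G c j * y j :=
    Finset.single_le_sum (f := fun j => adjMat G c j * y j)
      (fun j _ => mul_nonneg (adjMat_nonneg G c j) (hnn j)) (Finset.mem_univ x)
  rw [adjMat_of_adj hadj.symm, one_mul, h1] at h2
  exact absurd (lt_of_lt_of_le hx h2) (lt_irrefl 0)

lemma specRad_lt_of_lt {G G' : SimpleGraph V} [Fintype V] (hconn : G.Connected)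
    (hle : G ≤ G') {a b : V} (hab : G'.Adj a b) (hnab : ¬ G.Adj a b) :
    specRad G < specRad G' := by
  classical
  haveI : Nonempty V := hconn.nonempty
  obtain ⟨y, hnn, hy0, he, _⟩ := spectral_main G
  obtain ⟨y', hnn', hy0', he', hbound'⟩ := spectral_main G'
  have hpos := perron_pos hconn.preconnected hnn hy0 he
  have hS : 0 < ∑ i, y i ^ 2 := by
    refine Finset.sum_pos (fun i _ => ?_) Finset.univ_nonempty
    exact pow_pos (hpos i) 2
  have h1 : ∑ i, ∑ j, adjMat G i j * y j * y i = specRad G * ∑ i, y i ^ 2 := eigen_sum he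
  have h2 : ∑ i, ∑ j, adjMat G' i j * y j * y i ≤ specRad G' * ∑ i, y i ^ 2 := hbound' y
  have h3 : ∑ i, ∑ j, adjMat G i j * y j * y i < ∑ i, ∑ j, adjMat G' i j * y j * y i := by
    refine Finset.sum_lt_sum (fun i _ => Finset.sum_le_sum fun j _ => ?_) ⟨a, Finset.mem_univ a, ?_⟩
    · exact mul_le_mul_of_nonneg_right
        (mul_le_mul_of_nonneg_right (adjMat_le hle i j) (le_of_lt (hpos j)))
        (le_of_lt (hpos i))
    · refine Finset.sum_lt_sum (fun j _ => ?_) ⟨b, Finset.mem_univ b, ?_⟩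
      · exact mul_le_mul_of_nonneg_right
          (mul_le_mul_of_nonneg_right (adjMat_le hle a j) (le_of_lt (hpos j)))
          (le_of_lt (hpos a))
      · rw [adjMat_of_adj hab]
        have : adjMat G a b = 0 := by unfold adjMat; simp [hnab]
        rw [this]
        have := mul_pos (hpos b) (hpos a)
        nlinarith [hpos a, hpos b]
  have : specRad G * ∑ i, y i ^ 2 < specRad G' * ∑ i, y i ^ 2 := by
    rw [← h1]
    exact lt_of_lt_of_le h3 h2
  exact lt_of_mul_lt_mul_right (by linarith) (le_of_lt hS)

end Spectral

lemma dissoc_bound_subset [Finite V] {G : SimpleGraph V} {K D : Set V} {v : V} (hv : v ∈ D)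
    (hDdis : IsDissoc G D)
    (habs : ∀ u ∈ D, u ∈ K → u ≠ v → G.Adj v u) :
    (D ∩ {u | (completeOn G K).Adj v u}).ncard ≤ 1 := by
  refine le_trans (Set.ncard_le_ncard ?_ (Set.toFinite _)) (hDdis v hv)
  rintro u ⟨huD, hadj⟩
  rcases hadj with h | ⟨hne', _, huK⟩
  · exact ⟨huD, h⟩
  · exact ⟨huD, habs u huD huK (Ne.symm hne')⟩

lemma dissoc_bound_pair [Finite V] {G : SimpleGraph V} {K D : Set V} {v b' : V}
    (hempty : D ∩ {u | G.Adj v u} = ∅)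
    (honly : ∀ u ∈ D, u ∈ K → u ≠ v → u = b') :
    (D ∩ {u | (completeOn G K).Adj v u}).ncard ≤ 1 := by
  have hsub : (D ∩ {u | (completeOn G K).Adj v u}) ⊆ {b'} := by
    rintro u ⟨huD, hadj⟩
    rcases hadj with h | ⟨hne', _, huK⟩
    · exact absurd (show u ∈ D ∩ {u | G.Adj v u} from ⟨huD, h⟩) (by rw [hempty]; simp)
    · exact honly u huD huK (Ne.symm hne')
  exact le_trans (Set.ncard_le_ncard hsub (Set.toFinite _)) (by simp)


/-- If a block graph `G ∈ Bl(k,φ)` has two adjacent blocks each meeting a maximum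
dissociation set in exactly one vertex, then `G` does not have maximal spectral
radius in `Bl(k,φ)`. -/
theorem not_maximal_of_two_adjacent_blocks (k φ : ℕ) (G : SimpleGraph (Fin k)) (hG : memBl k φ G)
    (D : Set (Fin k)) (hD : IsMaxDissoc G D)
    (B₁ B₂ : Set (Fin k)) (hB₁ : IsBlock G B₁) (hB₂ : IsBlock G B₂) (hne : B₁ ≠ B₂)
    (w : Fin k) (hw : w ∈ B₁ ∩ B₂)
    (h₁ : (B₁ ∩ D).ncard = 1) (h₂ : (B₂ ∩ D).ncard = 1) :
    ∃ G' : SimpleGraph (Fin k), memBl k φ G' ∧ specRad G < specRad G' := by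
  classical
  obtain ⟨hBG, hφ⟩ := hG
  have hDdis := hD.1
  obtain ⟨a, ha⟩ := Set.ncard_eq_one.1 h₁
  obtain ⟨b, hb⟩ := Set.ncard_eq_one.1 h₂
  have haBD : a ∈ B₁ ∩ D := by rw [ha]; rfl
  have hbBD : b ∈ B₂ ∩ D := by rw [hb]; rfl
  have key : ∃ (C₁ C₂ : Set (Fin k)) (z : Fin k), IsBlock G C₁ ∧ IsBlock G C₂ ∧ C₁ ≠ C₂ ∧
      z ∈ C₁ ∧ z ∈ C₂ ∧ IsDissoc (completeOn G (C₁ ∪ C₂)) D := by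
    rcases eq_or_ne a b with rfl | hab
    · refine ⟨B₁, B₂, w, hB₁, hB₂, hne, hw.1, hw.2, ?_⟩
      refine isDissoc_completeOn_of hDdis ?_
      intro v hvD hvK
      have hva : v = a := by
        rcases hvK with hv1 | hv2
        · have hm : v ∈ B₁ ∩ D := ⟨hv1, hvD⟩
          rw [ha] at hm; exact hm
        · have hm : v ∈ B₂ ∩ D := ⟨hv2, hvD⟩
          rw [hb] at hm; exact hm
      subst hva
      refine dissoc_bound_subset hvD hDdis ?_
      intro u huD huK huv
      exfalso
      apply huv
      rcases huK with h1' | h2'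
      · have hm : u ∈ B₁ ∩ D := ⟨h1', huD⟩
        rw [ha] at hm; exact hm
      · have hm : u ∈ B₂ ∩ D := ⟨h2', huD⟩
        rw [hb] at hm; exact hm
    · by_cases hpa : ∃ p ∈ D, G.Adj a p
      · obtain ⟨p, hpD, hap⟩ := hpa
        obtain ⟨B₀, hB₀, haB₀, hpB₀⟩ := exists_block_of_adj hap
        have hpne : p ∉ B₁ := by
          intro hpB₁
          have hm : p ∈ B₁ ∩ D := ⟨hpB₁, hpD⟩
          rw [ha] at hm
          exact hap.ne hm.symm
        have hB₀ne : B₀ ≠ B₁ := fun h => hpne (h ▸ hpB₀)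
        refine ⟨B₀, B₁, a, hB₀, hB₁, hB₀ne, haB₀, haBD.1, ?_⟩
        have hmem : ∀ u ∈ D, u ∈ B₀ ∪ B₁ → u = a ∨ u = p := by
          intro u huD huK
          rcases huK with h0 | h1'
          · rcases eq_or_ne u a with rfl | hua
            · exact Or.inl rfl
            · have hadj : G.Adj a u := (hBG.2 B₀ hB₀) haB₀ h0 (Ne.symm hua)
              right
              by_contra hup
              have hpairsub : ({u, p} : Set (Fin k)) ⊆ D ∩ {x | G.Adj a x} := by
                rintro x (rfl | hx)
                · exact ⟨huD, hadj⟩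
                · rw [Set.mem_singleton_iff] at hx
                  subst hx
                  exact ⟨hpD, hap⟩
              have h2' : ({u, p} : Set (Fin k)).ncard = 2 := Set.ncard_pair hup
              have hle2 := Set.ncard_le_ncard hpairsub (Set.toFinite _)
              rw [h2'] at hle2
              have hle1 := hDdis a haBD.2
              omega
          · left
            have hm : u ∈ B₁ ∩ D := ⟨h1', huD⟩
            rw [ha] at hm; exact hm
        refine isDissoc_completeOn_of hDdis ?_
        intro v hvD hvK
        rcases hmem v hvD hvK with rfl | rfl
        · refine dissoc_bound_subset hvD hDdis ?_
          intro u huD huK huv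
          rcases hmem u huD huK with rfl | rfl
          · exact absurd rfl huv
          · exact hap
        · refine dissoc_bound_subset hvD hDdis ?_
          intro u huD huK huv
          rcases hmem u huD huK with rfl | rfl
          · exact hap.symm
          · exact absurd rfl huv
      · by_cases hpb : ∃ q ∈ D, G.Adj b q
        · obtain ⟨q, hqD, hbq⟩ := hpb
          obtain ⟨B₀, hB₀, hbB₀, hqB₀⟩ := exists_block_of_adj hbq
          have hqne : q ∉ B₂ := by
            intro hqB₂
            have hm : q ∈ B₂ ∩ D := ⟨hqB₂, hqD⟩
            rw [hb] at hm
            exact hbq.ne hm.symm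
          have hB₀ne : B₀ ≠ B₂ := fun h => hqne (h ▸ hqB₀)
          refine ⟨B₀, B₂, b, hB₀, hB₂, hB₀ne, hbB₀, hbBD.1, ?_⟩
          have hmem : ∀ u ∈ D, u ∈ B₀ ∪ B₂ → u = b ∨ u = q := by
            intro u huD huK
            rcases huK with h0 | h2'
            · rcases eq_or_ne u b with rfl | hub
              · exact Or.inl rfl
              · have hadj : G.Adj b u := (hBG.2 B₀ hB₀) hbB₀ h0 (Ne.symm hub)
                right
                by_contra huq
                have hpairsub : ({u, q} : Set (Fin k)) ⊆ D ∩ {x | G.Adj b x} := by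
                  rintro x (rfl | hx)
                  · exact ⟨huD, hadj⟩
                  · rw [Set.mem_singleton_iff] at hx
                    subst hx
                    exact ⟨hqD, hbq⟩
                have h2'' : ({u, q} : Set (Fin k)).ncard = 2 := Set.ncard_pair huq
                have hle2 := Set.ncard_le_ncard hpairsub (Set.toFinite _)
                rw [h2''] at hle2
                have hle1 := hDdis b hbBD.2
                omega
            · left
              have hm : u ∈ B₂ ∩ D := ⟨h2', huD⟩
              rw [hb] at hm; exact hm
          refine isDissoc_completeOn_of hDdis ?_
          intro v hvD hvK
          rcases hmem v hvD hvK with rfl | rfl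
          · refine dissoc_bound_subset hvD hDdis ?_
            intro u huD huK huv
            rcases hmem u huD huK with rfl | rfl
            · exact absurd rfl huv
            · exact hbq
          · refine dissoc_bound_subset hvD hDdis ?_
            intro u huD huK huv
            rcases hmem u huD huK with rfl | rfl
            · exact hbq.symm
            · exact absurd rfl huv
        · refine ⟨B₁, B₂, w, hB₁, hB₂, hne, hw.1, hw.2, ?_⟩
          have hmem : ∀ u ∈ D, u ∈ B₁ ∪ B₂ → u = a ∨ u = b := by
            intro u huD huK
            rcases huK with h1' | h2'
            · left
              have hm : u ∈ B₁ ∩ D := ⟨h1', huD⟩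
              rw [ha] at hm; exact hm
            · right
              have hm : u ∈ B₂ ∩ D := ⟨h2', huD⟩
              rw [hb] at hm; exact hm
          refine isDissoc_completeOn_of hDdis ?_
          intro v hvD hvK
          rcases hmem v hvD hvK with rfl | rfl
          · refine dissoc_bound_pair (b' := b) ?_ ?_
            · ext u
              simp only [Set.mem_inter_iff, Set.mem_setOf_eq, Set.mem_empty_iff_false, iff_false,
                not_and]
              intro huD hadj
              exact hpa ⟨u, huD, hadj⟩
            · intro u huD huK huv
              rcases hmem u huD huK with rfl | rfl
              · exact absurd rfl huv
              · rfl
          · refine dissoc_bound_pair (b' := a) ?_ ?_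
            · ext u
              simp only [Set.mem_inter_iff, Set.mem_setOf_eq, Set.mem_empty_iff_false, iff_false,
                not_and]
              intro huD hadj
              exact hpb ⟨u, huD, hadj⟩
            · intro u huD huK huv
              rcases hmem u huD huK with rfl | rfl
              · rfl
              · exact absurd rfl huv
  obtain ⟨C₁, C₂, z, hC₁, hC₂, hC12, hz1, hz2, hdis'⟩ := key
  refine ⟨completeOn G (C₁ ∪ C₂), ⟨completeOn_isBlockGraph hBG hC₁ hC₂ hC12 hz1 hz2, ?_⟩, ?_⟩
  · exact (dissocNum_eq_of (le_completeOn _ _) hD hdis').trans hφ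
  · obtain ⟨a0, b0, ha0, hb0, hne0, hnadj⟩ := exists_nonadj_in_union hBG hC₁ hC₂ hC12 hz1 hz2
    exact specRad_lt_of_lt hBG.1 (le_completeOn _ _) (Or.inr ⟨hne0, ha0, hb0⟩) hnadj

end SpectralBlock
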